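/- arXiv:1211.7020 — 2 statements merged into one kernel-verified Lean document; each statement's English description precedes it below -/
import Mathlib

section
/- Suppose s₀, s₁ : ℕ → ℝ≥0 satisfy: (i) s₀(n) ∼ A n^c for some A, c > 0, and (ii) for all d ≤ r ≤ n, s₀(r) ≥ (C(n−d,r−d)/C(n,r)) s₀(n) + (C(n−d−1,r−d)/C(n,r)) s₁(n). Then there exists n₀ such that s₁(n) < (d − c/4) s₀(n) for all n ≥ n₀. -/
/-!
Pick a sampling fraction `α ∈ (0, 1)` with `(α ^ (c - d) - 1) / (1 - α) < d - c / 4`; this is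
possible because the left side tends to `d - c` as `α → 1⁻`. For `r = ⌈α n⌉`, the identities
`C(n-d, r-d) / C(n, r) = C(r, d) / C(n, d)` and `(n-d) C(n-d-1, r-d) = (n-r) C(n-d, r-d)` turn the
sampling inequality into
`s₁(n) / s₀(n) ≤ (n-d)/(n-r) * (s₀(r)/s₀(n) / (C(r, d)/C(n, d)) - 1)`,
whose right side tends to `(α ^ (c - d) - 1) / (1 - α)` since `s₀(r)/s₀(n) → α ^ c` and
`C(r, d)/C(n, d) → α ^ d`.
-/

open Filter Topology Asymptotics

theorem tendsto_rpow_sub_one_div_one_sub (p : ℝ) :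
    Tendsto (fun x : ℝ => (x ^ p - 1) / (1 - x)) (𝓝[<] 1) (𝓝 (-p)) := by
  have hslope : Tendsto (slope (fun x : ℝ => x ^ p) 1) (𝓝[≠] 1) (𝓝 p) := by
    simpa using hasDerivAt_iff_tendsto_slope.mp
      (Real.hasDerivAt_rpow_const (p := p) (Or.inl one_ne_zero))
  refine (hslope.mono_left (nhdsWithin_mono _ fun x hx => ne_of_lt hx)).neg.congr fun x => ?_
  rw [slope_def_field, Real.one_rpow, ← div_neg, neg_sub]

theorem exists_rpow_sub_one_div_one_sub_lt {p L : ℝ} (hL : -p < L) :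
    ∃ α ∈ Set.Ioo (0 : ℝ) 1, (α ^ p - 1) / (1 - α) < L :=
  (Eventually.and (Ioo_mem_nhdsLT zero_lt_one)
    ((tendsto_rpow_sub_one_div_one_sub p).eventually_lt_const hL)).exists

theorem cast_choose_sub_div_cast_choose {d r n : ℕ} (hdr : d ≤ r) (hrn : r ≤ n) :
    ((n - d).choose (r - d) : ℝ) / n.choose r = (r.choose d : ℝ) / n.choose d := by
  have hnr : (n.choose r : ℝ) ≠ 0 := by exact_mod_cast (Nat.choose_pos hrn).ne'
  have hnd : (n.choose d : ℝ) ≠ 0 := by exact_mod_cast (Nat.choose_pos (hdr.trans hrn)).ne'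
  rw [div_eq_div_iff hnr hnd, mul_comm, mul_comm (r.choose d : ℝ)]
  exact_mod_cast (Nat.choose_mul hdr).symm

theorem cast_choose_pred_mul_sub {d r n : ℕ} (hdr : d ≤ r) (hrn : r < n) :
    ((n - d - 1).choose (r - d) : ℝ) * (n - d) = (n - d).choose (r - d) * (n - r) := by
  have h := Nat.choose_mul_succ_eq (n - d - 1) (r - d)
  rw [show n - d - 1 + 1 = n - d by omega, show n - d - (r - d) = n - r by omega] at h
  rw [← Nat.cast_sub (by omega), ← Nat.cast_sub hrn.le]
  exact_mod_cast h

theorem div_le_of_sampling_inequality {d r n : ℕ} (hdr : d ≤ r) (hrn : r < n) {x y z : ℝ}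
    (hy : 0 < y)
    (h : x ≥ ((n - d).choose (r - d) : ℝ) / n.choose r * y
      + ((n - d - 1).choose (r - d) : ℝ) / n.choose r * z) :
    z / y ≤ (n - d) / (n - r) * (x / y / ((r.choose d : ℝ) / n.choose d) - 1) := by
  rw [← cast_choose_sub_div_cast_choose hdr hrn.le]
  set Q : ℝ := ((n - d).choose (r - d) : ℝ) / n.choose r with hQ_def
  have hQ : 0 < Q := by
    have := Nat.choose_pos (show r - d ≤ n - d by omega)
    have := Nat.choose_pos hrn.le
    positivity
  have hnd : (0 : ℝ) < n - d := by
    have : (d : ℝ) < n := by exact_mod_cast hdr.trans_lt hrn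
    linarith
  have hnr : (0 : ℝ) < n - r := by
    have : (r : ℝ) < n := by exact_mod_cast hrn
    linarith
  have hcoef : ((n - d - 1).choose (r - d) : ℝ) / n.choose r = Q * ((n - r) / (n - d)) := by
    rw [hQ_def]
    field_simp
    rw [cast_choose_pred_mul_sub hdr hrn]
  rw [hcoef] at h
  have hb : Q * ((n - r) / (n - d)) * z ≤ x - Q * y := by linarith
  calc z / y = Q * ((n - r) / (n - d)) * z / (Q * ((n - r) / (n - d)) * y) := by
        field_simp
    _ ≤ (x - Q * y) / (Q * ((n - r) / (n - d)) * y) := by gcongr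
    _ = (n - d) / (n - r) * (x / y / Q - 1) := by field_simp

section SampleSize

variable {r : ℕ → ℕ} {α : ℝ}

theorem tendsto_atTop_of_tendsto_cast_div (hα : 0 < α)
    (hr : Tendsto (fun n => (r n : ℝ) / n) atTop (𝓝 α)) : Tendsto r atTop atTop :=
  tendsto_natCast_atTop_iff.mp (Tendsto.num tendsto_natCast_atTop_atTop hα hr)

theorem tendsto_comp_div_of_isEquivalent_rpow {f : ℕ → ℝ} {B p : ℝ} (hB : B ≠ 0)
    (hf : f ~[atTop] fun n => B * (n : ℝ) ^ p) (hα : 0 < α)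
    (hr : Tendsto (fun n => (r n : ℝ) / n) atTop (𝓝 α)) :
    Tendsto (fun n => f (r n) / f n) atTop (𝓝 (α ^ p)) := by
  have hequiv : (fun n => f (r n) / f n) ~[atTop] fun n => B * (r n : ℝ) ^ p / (B * (n : ℝ) ^ p) :=
    (hf.comp_tendsto (tendsto_atTop_of_tendsto_cast_div hα hr)).div hf
  refine hequiv.symm.tendsto_nhds ((hr.rpow_const (Or.inl hα.ne')).congr' ?_)
  filter_upwards [eventually_ge_atTop 1] with n hn
  have : (0 : ℝ) < (n : ℝ) ^ p := Real.rpow_pos_of_pos (by exact_mod_cast hn) p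
  rw [Real.div_rpow (Nat.cast_nonneg _) (Nat.cast_nonneg _)]
  field_simp

theorem tendsto_choose_comp_div_choose (d : ℕ) (hα : 0 < α)
    (hr : Tendsto (fun n => (r n : ℝ) / n) atTop (𝓝 α)) :
    Tendsto (fun n => ((r n).choose d : ℝ) / n.choose d) atTop (𝓝 (α ^ d)) := by
  have hf : (fun n : ℕ => (n.choose d : ℝ)) ~[atTop]
      fun n => (d.factorial : ℝ)⁻¹ * (n : ℝ) ^ (d : ℝ) := by
    simpa only [Real.rpow_natCast, div_eq_inv_mul] using isEquivalent_choose d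
  simpa only [Real.rpow_natCast] using
    tendsto_comp_div_of_isEquivalent_rpow (by positivity) hf hα hr

theorem tendsto_sub_div_sub_comp (a : ℝ) (hα : α ≠ 1)
    (hr : Tendsto (fun n => (r n : ℝ) / n) atTop (𝓝 α)) :
    Tendsto (fun n : ℕ => ((n : ℝ) - a) / (n - r n)) atTop (𝓝 (1 - α)⁻¹) := by
  have h := ((tendsto_const_nhds (x := (1 : ℝ))).sub
    (tendsto_const_div_atTop_nhds_zero_nat a)).div
    (tendsto_const_nhds.sub hr) (sub_ne_zero.2 hα.symm)
  rw [sub_zero, one_div] at h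
  refine h.congr' ?_
  filter_upwards [eventually_ge_atTop 1] with n hn
  have : (n : ℝ) ≠ 0 := by positivity
  rw [Pi.div_apply, one_sub_div this, one_sub_div this, div_div_div_cancel_right₀ this]

theorem tendsto_sampling_bound (d : ℕ) {s₀ : ℕ → ℝ} {A c : ℝ} (hA : A ≠ 0)
    (hs₀ : s₀ ~[atTop] fun n => A * (n : ℝ) ^ c) (hα₀ : 0 < α) (hα₁ : α < 1)
    (hr : Tendsto (fun n => (r n : ℝ) / n) atTop (𝓝 α)) :
    Tendsto (fun n : ℕ => ((n : ℝ) - d) / (n - r n)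
        * (s₀ (r n) / s₀ n / (((r n).choose d : ℝ) / n.choose d) - 1))
      atTop (𝓝 ((α ^ (c - d) - 1) / (1 - α))) := by
  have h := (tendsto_sub_div_sub_comp d hα₁.ne hr).mul
    (((tendsto_comp_div_of_isEquivalent_rpow hA hs₀ hα₀ hr).div
      (tendsto_choose_comp_div_choose d hα₀ hr) (pow_pos hα₀ d).ne').sub_const 1)
  rw [Real.rpow_sub hα₀, Real.rpow_natCast, div_eq_inv_mul (_ - 1)]
  exact h

end SampleSize

theorem stmt14_general (d : ℕ) (s₀ s₁ : ℕ → ℝ)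
    (A c : ℝ) (hA : 0 < A) (hc : 0 < c)
    (hasymp : Filter.Tendsto (fun n : ℕ => s₀ n / (A * (n : ℝ) ^ c)) Filter.atTop (nhds 1))
    (hsamp : ∀ r n : ℕ, d ≤ r → r ≤ n →
      s₀ r ≥ (((n - d).choose (r - d) : ℝ) / (n.choose r : ℝ)) * s₀ n
        + (((n - d - 1).choose (r - d) : ℝ) / (n.choose r : ℝ)) * s₁ n) :
    ∃ n₀ : ℕ, ∀ n ≥ n₀, s₁ n < ((d : ℝ) - c / 4) * s₀ n := by
  obtain ⟨α, ⟨hα₀, hα₁⟩, hα⟩ :=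
    exists_rpow_sub_one_div_one_sub_lt (p := c - d) (L := d - c / 4) (by linarith)
  set r : ℕ → ℕ := fun n => ⌈α * n⌉₊
  have hr : Tendsto (fun n => (r n : ℝ) / n) atTop (𝓝 α) :=
    (tendsto_nat_ceil_mul_div_atTop hα₀.le).comp tendsto_natCast_atTop_atTop
  have hs₀ : s₀ ~[atTop] fun n => A * (n : ℝ) ^ c := isEquivalent_of_tendsto_one hasymp
  have hs₀_pos : ∀ᶠ n in atTop, 0 < s₀ n := hs₀.eventually_pos <| by
    filter_upwards [eventually_ge_atTop 1] with n hn
    have : (0 : ℝ) < n := by exact_mod_cast hn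
    positivity
  have hr_lt : ∀ᶠ n in atTop, r n < n := by
    filter_upwards [hr.eventually_lt_const hα₁, eventually_ge_atTop 1] with n hn hn₁
    exact_mod_cast (div_lt_one (by exact_mod_cast hn₁)).mp hn
  refine eventually_atTop.mp ?_
  filter_upwards [(tendsto_sampling_bound d hA.ne' hs₀ hα₀ hα₁ hr).eventually_lt_const hα,
    hs₀_pos, hr_lt, (tendsto_atTop_of_tendsto_cast_div hα₀ hr).eventually_ge_atTop d]
    with n hlt hpos hrn hdr
  rw [← div_lt_iff₀ hpos]
  exact (div_le_of_sampling_inequality hdr hrn hpos (hsamp (r n) n hdr hrn.le)).trans_lt hlt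

/-- Clarkson's key analytic step: if `s₀(n) ∼ A n^c` with `A, c > 0`, `s₀, s₁ ≥ 0`, and the
sampling inequality `s₀(r) ≥ (C(n−d,r−d)/C(n,r)) s₀(n) + (C(n−d−1,r−d)/C(n,r)) s₁(n)` holds
for all `d ≤ r ≤ n`, then `s₁(n) < (d − c/4) s₀(n)` for all sufficiently large `n`. -/
theorem stmt14 (d : ℕ) (hd : 2 ≤ d) (s₀ s₁ : ℕ → ℝ)
    (h0 : ∀ n, 0 ≤ s₀ n) (h1 : ∀ n, 0 ≤ s₁ n)
    (A c : ℝ) (hA : 0 < A) (hc : 0 < c)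
    (hasymp : Filter.Tendsto (fun n : ℕ => s₀ n / (A * (n : ℝ) ^ c)) Filter.atTop (nhds 1))
    (hsamp : ∀ r n : ℕ, d ≤ r → r ≤ n →
      s₀ r ≥ (((n - d).choose (r - d) : ℝ) / (n.choose r : ℝ)) * s₀ n
        + (((n - d - 1).choose (r - d) : ℝ) / (n.choose r : ℝ)) * s₁ n) :
    ∃ n₀ : ℕ, ∀ n ≥ n₀, s₁ n < ((d : ℝ) - c / 4) * s₀ n :=
  stmt14_general d s₀ s₁ A c hA hc hasymp hsamp
end

section
/- Combining: if s₀ : ℕ → ℝ≥0 satisfies s₀(n) ∼ A n^c (A, c > 0), s₀(n) ≥ s₀(n−1) + (d s₀(n) − s₁(n))/n, and the sampling inequality s₀(r) ≥ (C(n−d,r−d)/C(n,r)) s₀(n) + (C(n−d−1,r−d)/C(n,r)) s₁(n) for all d ≤ r ≤ n, then there exists n₀ such that s₀(n) > s₀(n−1) for all n ≥ n₀. -/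
open Filter Topology

private lemma exp_neg_le_quad (x : ℝ) (hx : 0 ≤ x) : Real.exp (-x) ≤ 1 - x + x^2 := by
  have h1 : x + 1 ≤ Real.exp x := Real.add_one_le_exp x
  have hex : 0 < Real.exp x := Real.exp_pos x
  have hq : (0:ℝ) < 1 - x + x^2 := by nlinarith [sq_nonneg (x-1)]
  rw [Real.exp_neg, inv_le_iff_one_le_mul₀ hex]
  nlinarith [pow_nonneg hx 3]

private lemma rpow_one_sub_le {u : ℝ} (c : ℝ) (hu : 0 ≤ u) (hu2 : u < 1) (hc : 0 ≤ c) :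
    (1-u) ^ c ≤ 1 - c*u + (c*u)^2 := by
  have h1u : (0:ℝ) < 1 - u := by linarith
  rw [Real.rpow_def_of_pos h1u]
  have hlog : Real.log (1-u) ≤ -u := by
    have := Real.log_le_sub_one_of_pos h1u; linarith
  calc Real.exp (Real.log (1-u) * c) ≤ Real.exp (-(c*u)) := by
        apply Real.exp_le_exp.mpr; nlinarith
    _ ≤ 1 - c*u + (c*u)^2 := exp_neg_le_quad _ (by positivity)

private lemma choose_ratio_bound (d : ℕ) : ∀ n r : ℕ, r ≤ n →
    (((n+d).choose (r+d) : ℝ)) * (r:ℝ)^d ≤ ((n.choose r : ℝ)) * ((n:ℝ)+(d:ℝ))^d := by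
  induction d with
  | zero => intro n r h; simp
  | succ d ih =>
    intro n r h
    have key : (n+d+1) * ((n+d).choose (r+d)) = ((n+d+1).choose (r+d+1)) * (r+d+1) := by
      have := Nat.add_one_mul_choose_eq (n+d) (r+d)
      simpa [Nat.succ_eq_add_one] using this
    have keyR : ((n:ℝ)+d+1) * (((n+d).choose (r+d)):ℝ) = (((n+d+1).choose (r+d+1)):ℝ) * ((r:ℝ)+d+1) := by
      exact_mod_cast congrArg (Nat.cast (R := ℝ)) key
    have ihnr := ih n r h
    have hC : (0:ℝ) ≤ (n.choose r : ℝ) := by positivity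
    have hrd : (0:ℝ) < (r:ℝ)+d+1 := by positivity
    have hp : ((n:ℝ)+d)^d ≤ ((n:ℝ)+d+1)^d := by
      apply pow_le_pow_left₀ (by positivity) (by linarith)
    have goal' : (((n+d+1).choose (r+d+1)):ℝ) * (r:ℝ)^(d+1) * ((r:ℝ)+d+1)
        ≤ ((n.choose r : ℝ)) * ((n:ℝ)+d+1)^(d+1) * ((r:ℝ)+d+1) := by
      calc (((n+d+1).choose (r+d+1)):ℝ) * (r:ℝ)^(d+1) * ((r:ℝ)+d+1)
          = (((n:ℝ)+d+1) * (r:ℝ)) * ((((n+d).choose (r+d)):ℝ) * (r:ℝ)^d) := by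
            linear_combination (-((r:ℝ)^d * (r:ℝ))) * keyR
        _ ≤ (((n:ℝ)+d+1) * (r:ℝ)) * ((n.choose r : ℝ) * ((n:ℝ)+d)^d) := by
            apply mul_le_mul_of_nonneg_left ihnr (by positivity)
        _ ≤ (((n:ℝ)+d+1) * ((r:ℝ)+d+1)) * ((n.choose r : ℝ) * ((n:ℝ)+d+1)^d) := by
            apply mul_le_mul (by nlinarith) (mul_le_mul_of_nonneg_left hp hC) (by positivity) (by positivity)
        _ = ((n.choose r : ℝ)) * ((n:ℝ)+d+1)^(d+1) * ((r:ℝ)+d+1) := by ring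
    have h2 := le_of_mul_le_mul_right goal' hrd
    push_cast
    have h3 : ((n:ℝ) + ((d:ℝ) + 1)) = ((n:ℝ) + (d:ℝ) + 1) := by ring
    rw [h3]
    exact h2


private lemma keyP {c dd ε γ u w : ℝ} (hc : 0 < c) (hd2 : 2 ≤ dd)
    (hε0 : 0 < ε) (hε4 : ε ≤ 1/4)
    (hγ0 : 0 < γ) (hγc : γ ≤ c/4) (hγ1 : γ ≤ 1/4)
    (hu0 : 0 ≤ u) (hu1 : u ≤ 1) (hw0 : 0 ≤ w)
    (hcu1 : c*u ≤ 1)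
    (hεu : 3*ε ≤ (c/4)*u)
    (hPu : (c^2+dd^2)*u ≤ c/4)
    (hwP : (dd+dd^2)*w ≤ (c/4)*u) :
    (1+ε)*(1 - c*u + (c*u)^2) ≤ (1-dd*(u+w))*((1-ε)+u*(dd*(1-ε)-γ)) := by
  have hd0 : (0:ℝ) < dd := by linarith
  have hD0 : 0 ≤ dd*(1-ε) - γ := by
    nlinarith [mul_le_mul_of_nonneg_right hd2 (by linarith : (0:ℝ) ≤ 1-ε)]
  have hD_le : dd*(1-ε) - γ ≤ dd := by nlinarith [mul_nonneg hd0.le hε0.le]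
  have hcu0 : 0 ≤ c*u := mul_nonneg hc.le hu0
  have hL : (1+ε)*(1-c*u+(c*u)^2) ≤ 1 - c*u + (c*u)^2 + ε := by
    nlinarith [mul_nonneg (mul_nonneg hε0.le hcu0) (by linarith : (0:ℝ) ≤ 1 - c*u)]
  have hu2 : (c^2+dd^2)*u^2 ≤ (c/4)*u := by
    nlinarith [mul_le_mul_of_nonneg_right hPu hu0]
  have hγu : γ*u ≤ (c/4)*u := mul_le_mul_of_nonneg_right hγc hu0
  have hMid : 1 - c*u + (c*u)^2 + ε ≤ 1 - ε - γ*u - (dd+dd^2)*w - dd^2*u^2 := by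
    linarith [hεu, hwP, hu2, hγu]
  have hq1 : dd*(u+w)*u*(dd*(1-ε)-γ) ≤ dd^2*u^2 + dd^2*w := by
    have h0 : 0 ≤ dd*(u+w)*u := by positivity
    have h1 : dd*(u+w)*u*(dd*(1-ε)-γ) ≤ dd*(u+w)*u*dd :=
      mul_le_mul_of_nonneg_left hD_le h0
    linarith [h1, mul_nonneg (mul_nonneg (mul_nonneg hd0.le hd0.le) hw0) (sub_nonneg.mpr hu1)]
  have hq2 : dd*w*(1-ε) ≤ dd*w := by
    linarith [mul_nonneg (mul_nonneg hd0.le hw0) hε0.le]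
  have hR : 1 - ε - γ*u - (dd+dd^2)*w - dd^2*u^2 ≤ (1-dd*(u+w))*((1-ε)+u*(dd*(1-ε)-γ)) := by
    nlinarith [hq1, hq2]
  linarith [hL, hMid, hR]

set_option maxHeartbeats 1000000 in
/-- Clarkson-based monotonicity: if `s₀(n) ∼ A n^c` (`A, c > 0`), the deletion inequality
`s₀(n) ≥ s₀(n−1) + (d s₀(n) − s₁(n))/n` holds, and the sampling inequality
`s₀(r) ≥ (C(n−d,r−d)/C(n,r)) s₀(n) + (C(n−d−1,r−d)/C(n,r)) s₁(n)` holds for `d ≤ r ≤ n`,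
then `s₀(n) > s₀(n−1)` for all sufficiently large `n`. -/
theorem stmt16 (d : ℕ) (hd : 2 ≤ d) (s₀ s₁ : ℕ → ℝ)
    (h0 : ∀ n, 0 ≤ s₀ n) (h1 : ∀ n, 0 ≤ s₁ n)
    (A c : ℝ) (hA : 0 < A) (hc : 0 < c)
    (hasymp : Filter.Tendsto (fun n : ℕ => s₀ n / (A * (n : ℝ) ^ c)) Filter.atTop (nhds 1))
    (hdel : ∀ n : ℕ, 1 ≤ n →
      s₀ n ≥ s₀ (n - 1) + ((d : ℝ) * s₀ n - s₁ n) / n)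
    (hsamp : ∀ r n : ℕ, d ≤ r → r ≤ n →
      s₀ r ≥ (((n - d).choose (r - d) : ℝ) / (n.choose r : ℝ)) * s₀ n
        + (((n - d - 1).choose (r - d) : ℝ) / (n.choose r : ℝ)) * s₁ n) :
    ∃ n₀ : ℕ, ∀ n ≥ n₀, s₀ (n - 1) < s₀ n := by
  have hd2 : (2:ℝ) ≤ (d:ℝ) := by exact_mod_cast hd
  have hd0 : (0:ℝ) < d := by linarith
  -- choose m
  obtain ⟨m, hm2, hcm, hmbig⟩ : ∃ m : ℕ, 2 ≤ m ∧ c ≤ m ∧ 4*(c^2+(d:ℝ)^2) ≤ c * m := by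
    refine ⟨max 2 (max (Nat.ceil c) (Nat.ceil (4*(c^2+(d:ℝ)^2)/c))), le_max_left _ _, ?_, ?_⟩
    · have h1 : (Nat.ceil c : ℕ) ≤ max 2 (max (Nat.ceil c) (Nat.ceil (4*(c^2+(d:ℝ)^2)/c))) :=
        le_trans (le_max_left _ _) (le_max_right 2 _)
      exact le_trans (Nat.le_ceil c) (by exact_mod_cast h1)
    · have h2 : (Nat.ceil (4*(c^2+(d:ℝ)^2)/c) : ℕ) ≤ max 2 (max (Nat.ceil c) (Nat.ceil (4*(c^2+(d:ℝ)^2)/c))) :=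
        le_trans (le_max_right _ _) (le_max_right 2 _)
      have h1 : 4*(c^2+(d:ℝ)^2)/c ≤ (max 2 (max (Nat.ceil c) (Nat.ceil (4*(c^2+(d:ℝ)^2)/c))) : ℕ) :=
        le_trans (Nat.le_ceil _) (by exact_mod_cast h2)
      calc 4*(c^2+(d:ℝ)^2) = c * (4*(c^2+(d:ℝ)^2)/c) := by field_simp
        _ ≤ c * _ := mul_le_mul_of_nonneg_left h1 hc.le
  have hmR : (2:ℝ) ≤ (m:ℝ) := by exact_mod_cast hm2
  have hm0 : (0:ℝ) < m := by linarith
  set γ : ℝ := min c 1 / 4 with hγ_def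
  have hγ0 : 0 < γ := by
    have : 0 < min c 1 := lt_min hc one_pos
    simp only [hγ_def]; linarith
  have hγc : γ ≤ c/4 := by
    have : min c 1 ≤ c := min_le_left _ _
    simp only [hγ_def]; linarith
  have hγ1 : γ ≤ 1/4 := by
    have : min c 1 ≤ 1 := min_le_right _ _
    simp only [hγ_def]; linarith
  set ε : ℝ := min (c/(24*m)) (1/4) with hε_def
  have h24m : (0:ℝ) < 24*m := by linarith
  have hε0 : 0 < ε := lt_min (div_pos hc h24m) (by norm_num)
  have hε4 : ε ≤ 1/4 := min_le_right _ _
  have hεm : ε ≤ c/(24*m) := min_le_left _ _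
  obtain ⟨N₁, hN₁⟩ := Metric.tendsto_atTop.mp hasymp ε hε0
  set M : ℕ := max N₁ 1 with hM_def
  have hM1 : 1 ≤ M := le_max_right _ _
  have hbound : ∀ t : ℕ, M ≤ t →
      (1-ε)*(A*(t:ℝ)^c) ≤ s₀ t ∧ s₀ t ≤ (1+ε)*(A*(t:ℝ)^c) := by
    intro t ht
    have ht1 : 1 ≤ t := le_trans hM1 ht
    have htR : (0:ℝ) < (t:ℝ) := by exact_mod_cast ht1
    have htpos : (0:ℝ) < A * (t:ℝ)^c := by
      have := Real.rpow_pos_of_pos htR c; positivity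
    have h := hN₁ t (le_trans (le_max_left _ _) ht)
    rw [Real.dist_eq, abs_lt] at h
    have hst : s₀ t = (s₀ t / (A*(t:ℝ)^c)) * (A*(t:ℝ)^c) := (div_mul_cancel₀ _ htpos.ne').symm
    constructor
    · have h2 : (1-ε) * (A*(t:ℝ)^c) ≤ (s₀ t / (A*(t:ℝ)^c)) * (A*(t:ℝ)^c) :=
        mul_le_mul_of_nonneg_right (by linarith [h.1]) htpos.le
      linarith [hst ▸ h2]
    · have h2 : (s₀ t / (A*(t:ℝ)^c)) * (A*(t:ℝ)^c) ≤ (1+ε) * (A*(t:ℝ)^c) :=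
        mul_le_mul_of_nonneg_right (by linarith [h.2]) htpos.le
      linarith [hst ▸ h2]
  -- choose the threshold
  obtain ⟨N, hN1, hN2, hN3, hN4⟩ : ∃ N : ℕ, 2*m ≤ N ∧ 2*M ≤ N ∧ 4*d ≤ N ∧
      8*(m:ℝ)*((d:ℝ)^2+(d:ℝ)^3)/c < N := by
    refine ⟨max (max (2*m) (2*M)) (max (4*d) (Nat.ceil (8*(m:ℝ)*((d:ℝ)^2+(d:ℝ)^3)/c) + 1)),
      le_trans (le_max_left _ _) (le_max_left _ _),
      le_trans (le_max_right _ _) (le_max_left _ _),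
      le_trans (le_max_left _ _) (le_max_right _ _), ?_⟩
    have h1 : Nat.ceil (8*(m:ℝ)*((d:ℝ)^2+(d:ℝ)^3)/c) + 1 ≤
        max (max (2*m) (2*M)) (max (4*d) (Nat.ceil (8*(m:ℝ)*((d:ℝ)^2+(d:ℝ)^3)/c) + 1)) :=
      le_trans (le_max_right _ _) (le_max_right _ _)
    have h2 := Nat.le_ceil (8*(m:ℝ)*((d:ℝ)^2+(d:ℝ)^3)/c)
    have h3 : ((Nat.ceil (8*(m:ℝ)*((d:ℝ)^2+(d:ℝ)^3)/c) : ℕ) : ℝ) + 1 ≤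
        ((max (max (2*m) (2*M)) (max (4*d) (Nat.ceil (8*(m:ℝ)*((d:ℝ)^2+(d:ℝ)^3)/c) + 1)) : ℕ) : ℝ) := by
      exact_mod_cast h1
    linarith
  refine ⟨N, fun n hn => ?_⟩
  have hn2m : 2*m ≤ n := le_trans hN1 hn
  have hn2M : 2*M ≤ n := le_trans hN2 hn
  have hn4d : 4*d ≤ n := le_trans hN3 hn
  have hnK : 8*(m:ℝ)*((d:ℝ)^2+(d:ℝ)^3)/c ≤ (n:ℝ) := by
    have : (N:ℝ) ≤ n := by exact_mod_cast hn
    linarith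
  have hn1 : 1 ≤ n := by omega
  have hnR : (0:ℝ) < n := by exact_mod_cast hn1
  -- sampling parameters
  set k : ℕ := n / m with hk_def
  set r : ℕ := n - k with hr_def
  have hk1 : 1 ≤ k := by
    rw [hk_def]; exact (Nat.one_le_div_iff (by omega)).mpr (by omega)
  have hk2 : k ≤ n/2 := by
    rw [hk_def]; exact Nat.div_le_div_left hm2 (by norm_num)
  have hdn : d ≤ n := by omega
  have hdr : d ≤ r := by omega
  have hrn : r ≤ n := by omega
  have hrltn : r < n := by omega
  have hrM : M ≤ r := by omega
  have hkn : k ≤ n := by omega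
  have hdltn : d < n := by omega
  -- the sampling inequality instance (before folding names)
  have hs := hsamp r n hdr hrn
  set Cn : ℝ := (n.choose r : ℝ) with hCn_def
  set a : ℝ := ((n-d).choose (r-d) : ℝ) with ha_def
  set b : ℝ := ((n-d-1).choose (r-d) : ℝ) with hb_def
  have hCn : (0:ℝ) < Cn := by rw [hCn_def]; exact_mod_cast Nat.choose_pos hrn
  have ha : (0:ℝ) < a := by rw [ha_def]; exact_mod_cast Nat.choose_pos (by omega : r - d ≤ n - d)
  have hb : (0:ℝ) < b := by rw [hb_def]; exact_mod_cast Nat.choose_pos (by omega : r - d ≤ n - d - 1)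
  -- casts
  have hrR : (r:ℝ) = (n:ℝ) - (k:ℝ) := by rw [hr_def]; exact Nat.cast_sub hkn
  have hc1 : ((r - d : ℕ):ℝ) = (r:ℝ) - (d:ℝ) := Nat.cast_sub hdr
  have hc2 : ((n - d : ℕ):ℝ) = (n:ℝ) - (d:ℝ) := Nat.cast_sub hdn
  have hc3 : ((n - r : ℕ):ℝ) = (k:ℝ) := by rw [show n - r = k from by omega]
  -- k bounds in ℝ
  have hkmn : (k:ℝ)*m ≤ n := by
    have h : k*m ≤ n := by rw [hk_def]; exact Nat.div_mul_le_self n m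
    exact_mod_cast h
  have hnlt : (n:ℝ) < ((k:ℝ)+1)*m := by
    have hdm := Nat.div_add_mod n m
    have hml : n % m < m := Nat.mod_lt n (by omega)
    have hdmR : (m:ℝ)*(k:ℝ) + ((n % m : ℕ):ℝ) = n := by rw [hk_def]; exact_mod_cast hdm
    have hmlR : ((n % m : ℕ):ℝ) < m := by exact_mod_cast hml
    have he : ((k:ℝ)+1)*m = m*k + m := by ring
    linarith
  have hk1R : (1:ℝ) ≤ k := by exact_mod_cast hk1
  have hn2mR : 2*(m:ℝ) ≤ n := by exact_mod_cast hn2m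
  have hn_le_2km : (n:ℝ) ≤ (k:ℝ)*(2*m) := by
    have h5 : (m:ℝ)*1 ≤ m*k := mul_le_mul_of_nonneg_left hk1R hm0.le
    have he : ((k:ℝ)+1)*m = m*k + m := by ring
    have he2 : (k:ℝ)*(2*m) = m*k + m*k := by ring
    linarith
  -- u and w
  set u : ℝ := (k:ℝ)/n with hu_def
  set w : ℝ := (d:ℝ)/n with hw_def
  have hu0 : 0 ≤ u := by rw [hu_def]; positivity
  have hu_up : u ≤ 1/m := by
    rw [hu_def, div_le_div_iff₀ hnR hm0]; linarith
  have hu_low : 1/(2*m) ≤ u := by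
    rw [hu_def, div_le_div_iff₀ (by linarith) hnR]; linarith
  have hu_half : u ≤ 1/2 := by
    have : 1/(m:ℝ) ≤ 1/2 := by rw [div_le_div_iff₀ hm0 (by norm_num)]; linarith
    linarith
  have hu1 : u < 1 := by linarith
  have hw0 : 0 ≤ w := by rw [hw_def]; positivity
  have hw1 : w ≤ 1 := by rw [hw_def, div_le_one hnR]; exact_mod_cast hdn
  -- b identity
  have hbid_nat : (n-d-1).choose (r-d) * (n-d) = (n-d).choose (r-d) * (n-r) := by
    have h1 : n - d - 1 + 1 = n - d := by omega
    have h2 := Nat.choose_mul_succ_eq (n-d-1) (r-d)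
    rw [h1] at h2
    rw [h2]
    congr 1
    omega
  have hbidR : b * ((n:ℝ) - d) = a * (k:ℝ) := by
    have h : b * ((n - d : ℕ):ℝ) = a * ((n - r : ℕ):ℝ) := by
      rw [hb_def, ha_def]; exact_mod_cast hbid_nat
    rw [hc2, hc3] at h
    exact h
  -- lower bound on a
  have haQ : Cn * ((r:ℝ) - d)^d ≤ a * (n:ℝ)^d := by
    have h := choose_ratio_bound d (n-d) (r-d) (by omega)
    rw [show n - d + d = n from by omega, show r - d + d = r from by omega] at h
    rw [hc1, hc2] at h
    rw [hCn_def, ha_def]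
    have e : ((n:ℝ) - d + d) = (n:ℝ) := by ring
    rw [e] at h
    exact h
  -- geometry of u, w
  have hrn_mul : (r:ℝ) = (n:ℝ)*(1-u) := by
    rw [hrR, hu_def]; field_simp
  have hrdn : ((r:ℝ) - d)/(n:ℝ) = 1 - (u + w) := by
    rw [hrR, hu_def, hw_def]; field_simp; ring
  -- Bernoulli lower bound : Cn * (1 - d(u+w)) ≤ a
  have e4 : Cn * (1 - (d:ℝ)*(u+w)) ≤ a := by
    have hber : 1 - (d:ℝ)*(u+w) ≤ (1 - (u+w))^d := by
      have h := one_add_mul_le_pow (a := -(u+w)) (by linarith : (-2:ℝ) ≤ -(u+w)) d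
      have e1 : (1 + -(u+w)) = (1 - (u+w)) := by ring
      rw [e1] at h
      linarith
    have h2 : (1 - (u+w))^d = ((r:ℝ)-d)^d / (n:ℝ)^d := by rw [← hrdn, div_pow]
    have hnd_pos : (0:ℝ) < (n:ℝ)^d := by positivity
    calc Cn * (1 - (d:ℝ)*(u+w)) ≤ Cn * (((r:ℝ)-d)^d / (n:ℝ)^d) := by
          apply mul_le_mul_of_nonneg_left (le_trans hber (le_of_eq h2)) hCn.le
      _ = (Cn * ((r:ℝ)-d)^d) / (n:ℝ)^d := by ring
      _ ≤ (a * (n:ℝ)^d) / (n:ℝ)^d := by gcongr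
      _ = a := by field_simp
  -- b ≥ a u
  have e5 : a * u ≤ b := by
    have hbd : 0 ≤ b * (d:ℝ) := by positivity
    have h : a * u = (a * k)/n := by rw [hu_def]; ring
    rw [h, div_le_iff₀ hnR]
    linarith [hbidR, hbd]
  -- asymptotic bounds at n and r
  obtain ⟨hlo_n, hhi_n⟩ := hbound n (by omega)
  obtain ⟨hlo_r, hhi_r⟩ := hbound r hrM
  -- auxiliary numeric inequalities
  have hεm' : 3*ε ≤ (c/4)*u := by
    have h1 : c/(8*(m:ℝ)) = 3*(c/(24*m)) := by ring
    have h2 : (c/4)*(1/(2*(m:ℝ))) ≤ (c/4)*u := mul_le_mul_of_nonneg_left hu_low (by positivity)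
    have h3 : c/(8*(m:ℝ)) = (c/4)*(1/(2*m)) := by ring
    linarith
  have hPu : (c^2+(d:ℝ)^2)*u ≤ c/4 := by
    have h1 : (c^2+(d:ℝ)^2)*u ≤ (c^2+(d:ℝ)^2)*(1/m) := mul_le_mul_of_nonneg_left hu_up (by positivity)
    have h2 : (c^2+(d:ℝ)^2)*(1/(m:ℝ)) ≤ c/4 := by
      rw [mul_one_div, div_le_div_iff₀ hm0 (by norm_num)]
      linarith
    linarith
  have hcu1 : c*u ≤ 1 := by
    have h1 : c*u ≤ (m:ℝ)*(1/m) := mul_le_mul hcm hu_up hu0 (by linarith)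
    have h2 : (m:ℝ)*(1/m) = 1 := by field_simp
    linarith
  have hwP : ((d:ℝ)+(d:ℝ)^2)*w ≤ (c/4)*u := by
    have h1 : ((d:ℝ)+(d:ℝ)^2)*w = ((d:ℝ)^2+(d:ℝ)^3)/n := by rw [hw_def]; ring
    have h2 : ((d:ℝ)^2+(d:ℝ)^3)/n ≤ c/(8*m) := by
      rw [div_le_div_iff₀ hnR (by linarith)]
      have h3 := mul_le_mul_of_nonneg_left hnK hc.le
      have h4 : c * (8*(m:ℝ)*((d:ℝ)^2+(d:ℝ)^3)/c) = ((d:ℝ)^2+(d:ℝ)^3) * (8*m) := by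
        field_simp
      linarith
    have h5 : c/(8*(m:ℝ)) = (c/4)*(1/(2*m)) := by ring
    have h6 : (c/4)*(1/(2*(m:ℝ))) ≤ (c/4)*u := mul_le_mul_of_nonneg_left hu_low (by positivity)
    linarith
  have h2eps : 2*(1-ε) ≤ (d:ℝ)*(1-ε) := mul_le_mul_of_nonneg_right hd2 (by linarith)
  have hD0 : 0 ≤ (d:ℝ)*(1-ε) - γ := by linarith
  have P : (1+ε)*(1 - c*u + (c*u)^2) ≤ (1-(d:ℝ)*(u+w))*((1-ε)+u*((d:ℝ)*(1-ε)-γ)) :=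
    keyP hc hd2 hε0 hε4 hγ0 hγc hγ1 hu0 hu1.le hw0 hcu1 hεm' hPu hwP
  -- positivity of A n^c etc.
  have hnc_pos : (0:ℝ) < (n:ℝ)^c := Real.rpow_pos_of_pos hnR c
  have hAnc : (0:ℝ) < A*(n:ℝ)^c := by positivity
  -- r^c bound
  have e3 : (r:ℝ)^c ≤ (n:ℝ)^c * (1 - c*u + (c*u)^2) := by
    have h1 : (r:ℝ)^c = (n:ℝ)^c * (1-u)^c := by
      rw [hrn_mul, Real.mul_rpow hnR.le (by linarith : (0:ℝ) ≤ 1-u)]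
    rw [h1]
    exact mul_le_mul_of_nonneg_left (rpow_one_sub_le c hu0 hu1 hc.le) hnc_pos.le
  -- multiplied sampling inequality
  have hs' : a * s₀ n + b * s₁ n ≤ Cn * s₀ r := by
    calc a*s₀ n + b*s₁ n = Cn * ((a/Cn)*s₀ n + (b/Cn)*s₁ n) := by
          field_simp
      _ ≤ Cn * s₀ r := mul_le_mul_of_nonneg_left hs hCn.le
  -- bracket nonnegativity
  have hbr0 : (0:ℝ) ≤ (1-ε)+u*((d:ℝ)*(1-ε)-γ) := by
    have := mul_nonneg hu0 hD0
    linarith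
  -- main estimate
  have main : Cn * s₀ r ≤ a * s₀ n + b * (((d:ℝ)*(1-ε)-γ) * (A*(n:ℝ)^c)) := by
    calc Cn * s₀ r ≤ Cn * ((1+ε)*(A*(r:ℝ)^c)) := mul_le_mul_of_nonneg_left hhi_r hCn.le
      _ ≤ Cn * ((1+ε)*(A*((n:ℝ)^c*(1 - c*u + (c*u)^2)))) := by
          apply mul_le_mul_of_nonneg_left _ hCn.le
          apply mul_le_mul_of_nonneg_left _ (by linarith : (0:ℝ) ≤ 1+ε)
          exact mul_le_mul_of_nonneg_left e3 hA.le
      _ = (A*(n:ℝ)^c) * (Cn * ((1+ε)*(1 - c*u + (c*u)^2))) := by ring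
      _ ≤ (A*(n:ℝ)^c) * (Cn * ((1-(d:ℝ)*(u+w))*((1-ε)+u*((d:ℝ)*(1-ε)-γ)))) :=
          mul_le_mul_of_nonneg_left (mul_le_mul_of_nonneg_left P hCn.le) hAnc.le
      _ = (A*(n:ℝ)^c) * ((Cn * (1-(d:ℝ)*(u+w)))*((1-ε)+u*((d:ℝ)*(1-ε)-γ))) := by ring
      _ ≤ (A*(n:ℝ)^c) * (a*((1-ε)+u*((d:ℝ)*(1-ε)-γ))) :=
          mul_le_mul_of_nonneg_left (mul_le_mul_of_nonneg_right e4 hbr0) hAnc.le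
      _ = a*((1-ε)*(A*(n:ℝ)^c)) + (a*u)*(((d:ℝ)*(1-ε)-γ)*(A*(n:ℝ)^c)) := by ring
      _ ≤ a * s₀ n + b * (((d:ℝ)*(1-ε)-γ)*(A*(n:ℝ)^c)) :=
          add_le_add (mul_le_mul_of_nonneg_left hlo_n ha.le)
            (mul_le_mul_of_nonneg_right e5 (mul_nonneg hD0 hAnc.le))
  -- bound s₁
  have hs1 : s₁ n ≤ ((d:ℝ)*(1-ε)-γ) * (A*(n:ℝ)^c) := by
    have h := le_trans hs' main
    have h2 : b * s₁ n ≤ b * (((d:ℝ)*(1-ε)-γ) * (A*(n:ℝ)^c)) := by linarith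
    exact le_of_mul_le_mul_left (by linarith [h2]) hb
  -- conclude
  have hds : (d:ℝ)*((1-ε)*(A*(n:ℝ)^c)) ≤ (d:ℝ)*s₀ n := mul_le_mul_of_nonneg_left hlo_n hd0.le
  have key : γ*(A*(n:ℝ)^c) ≤ (d:ℝ)*s₀ n - s₁ n := by
    have he : (d:ℝ)*((1-ε)*(A*(n:ℝ)^c)) = ((d:ℝ)*(1-ε))*(A*(n:ℝ)^c) := by ring
    have he2 : ((d:ℝ)*(1-ε)-γ)*(A*(n:ℝ)^c) = ((d:ℝ)*(1-ε))*(A*(n:ℝ)^c) - γ*(A*(n:ℝ)^c) := by ring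
    linarith [hs1, hds]
  have hγA : (0:ℝ) < γ*(A*(n:ℝ)^c) := by positivity
  have hdiv : (0:ℝ) < ((d:ℝ)*s₀ n - s₁ n)/n := div_pos (by linarith) hnR
  have hdn' := hdel n hn1
  linarith [hdn', hdiv]
end
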